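/- arXiv:math/9911070 — 2 statements merged into one kernel-verified Lean document; each statement's English description precedes it below -/
import Mathlib

section
/- Let n > q ≥ 1 be coprime integers and let a₁,…,a_s be the unique sequence of integers with a_i ≥ 2 and [a₁,…,a_s] = n/(n−q). Define (i₁,j₁) = (n,0), (i₂,j₂) = (n−q,1), and (i_{k+1}, j_{k+1}) = a_{k-1}·(i_k, j_k) − (i_{k-1}, j_{k-1}) for 2 ≤ k ≤ s+1. Then the final pair is (i_{s+2}, j_{s+2}) = (0, n). -/
/-- The negative (Hirzebruch–Jung) continued fraction `[a₁,…,a_s] = a₁ − 1/(a₂ − 1/(⋯ − 1/a_s))`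
of a list of integers, as an element of `ℚ`; `none` if it is not well defined, i.e. if some
intermediate denominator vanishes (or the list is empty). -/
def ncf : List ℤ → Option ℚ
  | [] => none
  | [a] => some (a : ℚ)
  | a :: b :: rest =>
      match ncf (b :: rest) with
      | none => none
      | some v => if v = 0 then none else some ((a : ℚ) - 1 / v)

/-- The exponent pairs `(i_k, j_k)` of the canonical coordinates `z_k = x^{i_k} y^{j_k}`
(with 0-based index: `seqIJ n q a m = (i_{m+1}, j_{m+1})`), defined by
`(i₁,j₁) = (n,0)`, `(i₂,j₂) = (n−q,1)` and
`(i_{k+1}, j_{k+1}) = a_{k-1}·(i_k, j_k) − (i_{k-1}, j_{k-1})`,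
where `a m` is the 0-based `m`-th entry, i.e. `a_{m+1}`. -/
def seqIJ (n q : ℤ) (a : ℕ → ℤ) : ℕ → ℤ × ℤ
  | 0 => (n, 0)
  | 1 => (n - q, 1)
  | (m + 2) =>
      (a m * (seqIJ n q a (m + 1)).1 - (seqIJ n q a m).1,
       a m * (seqIJ n q a (m + 1)).2 - (seqIJ n q a m).2)

/-!
The step `(p, p') ↦ (p', c • p' - p)` preserves the determinant `i j' - i' j` of two consecutive
pairs, and if `i / i'` is the value of a negative continued fraction with head `c`, then `i' / i''`
is the value of its tail. Since all values are `> 1`, the first coordinates stay positive, and they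
stay coprime. At the last entry `c` we have `i = c i'` with `i, i'` coprime and `i' > 0`, so
`i' = 1`, and the next pair is `(0, i j' - i' j)`. For the initial pairs `(n, 0), (n - q, 1)` this
determinant is `n`.
-/

def hjRun : List ℤ → ℤ × ℤ → ℤ × ℤ → ℤ × ℤ
  | [], _, p' => p'
  | c :: l, p, p' => hjRun l p' (c • p' - p)

lemma seqIJ_eq_hjRun (n q : ℤ) (f : ℕ → ℤ) (l : List ℤ) (k : ℕ)
    (hf : ∀ m < l.length, f (k + m) = l.getD m 0) :
    seqIJ n q f (k + 1 + l.length) = hjRun l (seqIJ n q f k) (seqIJ n q f (k + 1)) := by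
  induction l generalizing k with
  | nil => rfl
  | cons c l ih =>
    have hc : f k = c := by simpa using hf 0 (by simp)
    have htail : ∀ m < l.length, f (k + 1 + m) = l.getD m 0 := fun m hm => by
      simpa [add_assoc, add_comm 1] using hf (m + 1) (by simpa using hm)
    rw [List.length_cons, show k + 1 + (l.length + 1) = k + 1 + 1 + l.length by omega,
      ih (k + 1) htail, hjRun, ← hc]
    rfl

lemma ncf_cons_cons_eq_some {c b : ℤ} {l : List ℤ} {v : ℚ} :
    ncf (c :: b :: l) = some v ↔ ∃ w, ncf (b :: l) = some w ∧ w ≠ 0 ∧ v = c - 1 / w := by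
  simp only [ncf]
  rcases ncf (b :: l) with _ | w
  · simp
  · by_cases hw : w = 0 <;> simp [hw, eq_comm]

lemma one_lt_of_ncf_eq_some :
    ∀ {l : List ℤ} {v : ℚ}, (∀ x ∈ l, 2 ≤ x) → ncf l = some v → 1 < v
  | [], _, _, hv => by simp [ncf] at hv
  | [c], v, h2, hv => by
    have hc : (2 : ℚ) ≤ c := by exact_mod_cast h2 c (by simp)
    simp only [ncf, Option.some.injEq] at hv
    linarith
  | c :: b :: l, v, h2, hv => by
    obtain ⟨w, hw, -, rfl⟩ := ncf_cons_cons_eq_some.1 hv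
    have hw1 : 1 < w := one_lt_of_ncf_eq_some (fun x hx => h2 x (List.mem_cons_of_mem _ hx)) hw
    have hc : (2 : ℚ) ≤ c := by exact_mod_cast h2 c (by simp)
    have : 1 / w < 1 := (div_lt_one (by linarith)).2 hw1
    linarith

theorem hjRun_eq_zero_det :
    ∀ {l : List ℤ} {v : ℚ} {p p' : ℤ × ℤ}, (∀ x ∈ l, 2 ≤ x) → ncf l = some v →
      (p.1 : ℚ) = v * p'.1 → 0 < p'.1 → IsCoprime p.1 p'.1 →
      hjRun l p p' = (0, p.1 * p'.2 - p'.1 * p.2)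
  | [], _, _, _, _, hv, _, _, _ => by simp [ncf] at hv
  | [c], v, p, p', _, hv, hrat, hpos, hcop => by
    simp only [ncf, Option.some.injEq] at hv
    subst hv
    have hp : p.1 = c * p'.1 := by exact_mod_cast hrat
    have hp' : p'.1 = 1 := by
      have hunit := hcop.isUnit_of_dvd' (hp ▸ dvd_mul_left p'.1 c) dvd_rfl
      rcases Int.isUnit_iff.1 hunit with h | h <;> omega
    simp only [hjRun, Prod.ext_iff, Prod.fst_sub, Prod.snd_sub, Prod.smul_fst, Prod.smul_snd,
      smul_eq_mul, hp, hp']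
    constructor <;> ring
  | c :: b :: l, v, p, p', h2, hv, hrat, hpos, hcop => by
    obtain ⟨w, hw, hw0, rfl⟩ := ncf_cons_cons_eq_some.1 hv
    have h2' : ∀ x ∈ b :: l, 2 ≤ x := fun x hx => h2 x (List.mem_cons_of_mem _ hx)
    have hw1 : 1 < w := one_lt_of_ncf_eq_some h2' hw
    set p'' := c • p' - p with hp''
    have hp''1 : p''.1 = c * p'.1 - p.1 := rfl
    have hrat' : (p'.1 : ℚ) = w * p''.1 := by
      rw [hp''1]
      push_cast
      rw [hrat]
      field_simp
      ring
    have hpos' : 0 < p''.1 := by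
      have : (0 : ℚ) < p''.1 := by
        have : (0 : ℚ) < p'.1 := by exact_mod_cast hpos
        nlinarith
      exact_mod_cast this
    have hcop' : IsCoprime p'.1 p''.1 := hp''1 ▸ IsCoprime.mul_sub_right_right_iff.2 hcop.symm
    rw [hjRun, hjRun_eq_zero_det h2' hw hrat' hpos' hcop']
    congr 1
    simp only [hp'', Prod.fst_sub, Prod.snd_sub, Prod.smul_fst, Prod.smul_snd, smul_eq_mul]
    ring

theorem stmt11_general (n q : ℤ) (hqn : q < n) (hco : Int.gcd n q = 1)
    (a : List ℤ) (ha2 : ∀ x ∈ a, 2 ≤ x)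
    (hval : ncf a = some ((n : ℚ) / ((n : ℚ) - (q : ℚ)))) :
    seqIJ n q (fun m => a.getD m 0) (a.length + 1) = (0, n) := by
  have hrun := seqIJ_eq_hjRun n q (fun m => a.getD m 0) a 0 (fun m _ => by simp)
  rw [zero_add, add_comm 1] at hrun
  have hnq : (n : ℚ) - q ≠ 0 := sub_ne_zero.2 (by exact_mod_cast hqn.ne')
  have hcop : IsCoprime n (n - q) := by
    simpa using (IsCoprime.mul_sub_left_right_iff (z := 1)).2 (Int.isCoprime_iff_gcd_eq_one.2 hco)
  rw [hrun]
  refine (hjRun_eq_zero_det (p := (n, 0)) (p' := (n - q, 1)) ha2 hval ?_ (sub_pos.2 hqn)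
    hcop).trans ?_
  · push_cast
    exact (div_mul_cancel₀ _ hnq).symm
  · simp

theorem stmt11 (n q : ℤ) (hq : 1 ≤ q) (hqn : q < n) (hco : Int.gcd n q = 1)
    (a : List ℤ) (ha2 : ∀ x ∈ a, 2 ≤ x)
    (hval : ncf a = some ((n : ℚ) / ((n : ℚ) - (q : ℚ)))) :
    seqIJ n q (fun m => a.getD m 0) (a.length + 1) = (0, n) :=
  stmt11_general n q hqn hco a ha2 hval
end

section
/- Let n > q ≥ 1 be coprime integers and let a₁,…,a_s be the unique sequence of integers with a_i ≥ 2 and [a₁,…,a_s] = n/(n−q). Define (i₁,j₁) = (n,0), (i₂,j₂) = (n−q,1), and (i_{k+1}, j_{k+1}) = a_{k-1}·(i_k, j_k) − (i_{k-1}, j_{k-1}) for 2 ≤ k ≤ s+1. Then all i_k and j_k are nonnegative, the sequence i₁ > i₂ > … > i_{s+2} is strictly decreasing, and the sequence j₁ < j₂ < … < j_{s+2} is strictly increasing. -/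
/-!
The first coordinates `i_k` satisfy the same recurrence as the remainders of the
Hirzebruch–Jung expansion of `n/(n-q)`: if `[a₁,…,a_s] = i₁/i₂` then `i₃ = a₁i₂ − i₁`
equals `i₂/[a₂,…,a_s]`, so `[a₂,…,a_s] = i₂/i₃`. Since a negative continued fraction with
entries `≥ 2` exceeds `1`, each ratio `i_k/i_{k+1}` is `> 1`, and the last step gives
`i_{s+2} = 0`. The second coordinates start `0, 1` and the recurrence with `a_k ≥ 2`
keeps the differences `j_{k+1} − j_k` from decreasing.
-/

lemma ncf_cons_cons_of_eq_some {a b : ℤ} {l : List ℤ} {v : ℚ} (h : ncf (b :: l) = some v)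
    (hv : v ≠ 0) : ncf (a :: b :: l) = some (a - 1 / v) := by
  simp [ncf, h, hv]

lemma exists_ncf_eq_some_one_lt {l : List ℤ} (hne : l ≠ []) (h2 : ∀ x ∈ l, 2 ≤ x) :
    ∃ v : ℚ, ncf l = some v ∧ 1 < v := by
  induction l with
  | nil => exact absurd rfl hne
  | cons a rest ih =>
    have ha : (2 : ℚ) ≤ a := by exact_mod_cast h2 a List.mem_cons_self
    cases rest with
    | nil => exact ⟨a, rfl, by linarith⟩
    | cons b l =>
      obtain ⟨v, hv, hv1⟩ :=
        ih (List.cons_ne_nil _ _) fun x hx => h2 x (List.mem_cons_of_mem a hx)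
      refine ⟨a - 1 / v, ncf_cons_cons_of_eq_some hv (by positivity), ?_⟩
      have : 1 / v < 1 := (div_lt_one (by linarith)).2 hv1
      linarith

lemma pos_and_lt_of_ncf_eq_div {a : List ℤ} (h2 : ∀ x ∈ a, 2 ≤ x) {s : ℕ → ℚ}
    (hrec : ∀ m < a.length, s (m + 2) = a.getD m 0 * s (m + 1) - s m) (hs1 : 0 < s 1)
    (hval : ncf a = some (s 0 / s 1)) :
    (∀ k ≤ a.length, 0 < s k ∧ s (k + 1) < s k) ∧ s (a.length + 1) = 0 := by
  induction a generalizing s with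
  | nil => simp [ncf] at hval
  | cons a₀ rest ih =>
    have hs2 : s 2 = a₀ * s 1 - s 0 := by simpa using hrec 0 (by simp)
    have hs01 : s 1 < s 0 := by
      obtain ⟨r, hr, hr1⟩ := exists_ncf_eq_some_one_lt (List.cons_ne_nil _ _) h2
      rw [hval, Option.some_inj] at hr
      rwa [← hr, one_lt_div hs1] at hr1
    cases rest with
    | nil =>
      have hs0 : s 0 = a₀ * s 1 := by
        simp only [ncf, Option.some_inj] at hval
        field_simp at hval
        linarith
      refine ⟨fun k hk => ?_, by simp [hs2, hs0]⟩
      simp only [List.length_singleton] at hk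
      interval_cases k
      · exact ⟨by linarith, hs01⟩
      · exact ⟨hs1, by simp [hs2, hs0, hs1]⟩
    | cons b l =>
      have h2_tail : ∀ x ∈ b :: l, 2 ≤ x := fun x hx => h2 x (List.mem_cons_of_mem a₀ hx)
      obtain ⟨v, hv, hv1⟩ := exists_ncf_eq_some_one_lt (List.cons_ne_nil _ _) h2_tail
      have hv0 : v ≠ 0 := by positivity
      have hs2v : s 2 = s 1 / v := by
        have h := (ncf_cons_cons_of_eq_some (a := a₀) hv hv0).symm.trans hval
        rw [Option.some_inj, eq_div_iff hs1.ne'] at h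
        rw [hs2, ← h]
        field_simp
        ring
      have hs2_pos : 0 < s 2 := by rw [hs2v]; positivity
      have htail : ncf (b :: l) = some (s 1 / s 2) := by
        rw [hv, hs2v, div_div_cancel₀ hs1.ne']
      obtain ⟨hdec, hlast⟩ := ih h2_tail (s := fun m => s (m + 1))
        (fun m hm => by simpa using hrec (m + 1) (by simpa using hm)) hs2_pos htail
      refine ⟨fun k hk => ?_, hlast⟩
      cases k with
      | zero => exact ⟨by linarith, hs01⟩
      | succ k => exact hdec k (by simpa using hk)

lemma nonneg_and_lt_succ_of_two_le_coeff {R : Type*} [CommRing R] [LinearOrder R]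
    [IsStrictOrderedRing R] {N : ℕ} {c : ℕ → R} {t : ℕ → R} (hc : ∀ m < N, 2 ≤ c m)
    (hrec : ∀ m < N, t (m + 2) = c m * t (m + 1) - t m) (h0 : 0 ≤ t 0) (h01 : t 0 < t 1) :
    ∀ k ≤ N, 0 ≤ t k ∧ t k < t (k + 1) := by
  intro k hk
  induction k with
  | zero => exact ⟨h0, h01⟩
  | succ k ih =>
    obtain ⟨htk, htk1⟩ := ih (by omega)
    have hck := hc k (by omega)
    refine ⟨by linarith, ?_⟩
    rw [hrec k (by omega)]
    nlinarith

theorem stmt12_general (n q : ℤ) (hqn : q < n)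
    (a : List ℤ) (ha2 : ∀ x ∈ a, 2 ≤ x)
    (hval : ncf a = some ((n : ℚ) / ((n : ℚ) - (q : ℚ)))) :
    (∀ k ≤ a.length + 1,
        0 ≤ (seqIJ n q (fun m => a.getD m 0) k).1 ∧
        0 ≤ (seqIJ n q (fun m => a.getD m 0) k).2) ∧
    (∀ k < a.length + 1,
        (seqIJ n q (fun m => a.getD m 0) (k + 1)).1 < (seqIJ n q (fun m => a.getD m 0) k).1 ∧
        (seqIJ n q (fun m => a.getD m 0) k).2 < (seqIJ n q (fun m => a.getD m 0) (k + 1)).2) := by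
  set c : ℕ → ℤ := fun m => a.getD m 0
  have hc : ∀ m < a.length, 2 ≤ c m := fun m hm => by
    rw [show c m = a[m] from List.getD_eq_getElem a 0 hm]
    exact ha2 _ (List.getElem_mem hm)
  obtain ⟨hi, hi_last⟩ := pos_and_lt_of_ncf_eq_div ha2 (s := fun k => ((seqIJ n q c k).1 : ℚ))
    (fun m _ => by simp [seqIJ, c]) (by simpa [seqIJ] using hqn)
    (by simpa [seqIJ] using hval)
  have hj := nonneg_and_lt_succ_of_two_le_coeff hc (t := fun k => (seqIJ n q c k).2)
    (fun m _ => rfl) le_rfl zero_lt_one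
  refine ⟨fun k hk => ⟨?_, ?_⟩, fun k hk => ⟨?_, (hj k (by omega)).2⟩⟩
  · rcases hk.lt_or_eq with hk | rfl
    · exact_mod_cast (hi k (by omega)).1.le
    · exact_mod_cast hi_last.ge
  · rcases k with _ | k
    · exact le_rfl
    · have := hj k (by omega)
      exact this.1.trans this.2.le
  · exact_mod_cast (hi k (by omega)).2

theorem stmt12 (n q : ℤ) (hq : 1 ≤ q) (hqn : q < n) (hco : Int.gcd n q = 1)
    (a : List ℤ) (ha2 : ∀ x ∈ a, 2 ≤ x)
    (hval : ncf a = some ((n : ℚ) / ((n : ℚ) - (q : ℚ)))) :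
    (∀ k ≤ a.length + 1,
        0 ≤ (seqIJ n q (fun m => a.getD m 0) k).1 ∧
        0 ≤ (seqIJ n q (fun m => a.getD m 0) k).2) ∧
    (∀ k < a.length + 1,
        (seqIJ n q (fun m => a.getD m 0) (k + 1)).1 < (seqIJ n q (fun m => a.getD m 0) k).1 ∧
        (seqIJ n q (fun m => a.getD m 0) k).2 < (seqIJ n q (fun m => a.getD m 0) (k + 1)).2) :=
  stmt12_general n q hqn a ha2 hval
end
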